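/- arXiv:2605.02116 — 6 statements merged into one kernel-verified Lean document; each statement's English description precedes it below -/
import Mathlib

section
/- Let $\phi : \mathbb{R} \to \mathbb{R}$ be convex with $\phi(0)=0$ and $1 \in \partial\phi(0)$, and let $\tau > 0$. Let $f : \mathcal{Z} \to [a,b]$ be a bounded measurable function and $\mathbf{z}$ a random variable. Then the unrestricted infimum $\inf_{\mu \in \mathbb{R}} \{ \tau\,\mathbb{E}[\phi((f(\mathbf{z})-\mu)/\tau)] + \mu\}$ equals the restricted infimum $\inf_{\mu \in [a,b]} \{ \tau\,\mathbb{E}[\phi((f(\mathbf{z})-\mu)/\tau)] + \mu\}$. In particular, defining $\lambda(\mu) = \tau\,\mathbb{E}[\phi((f(\mathbf{z})-\mu)/\tau)] + \mu$, one has $\lambda(b+\epsilon) \ge \lambda(b)$ and $\lambda(a-\epsilon) \ge \lambda(a)$ for every $\epsilon > 0$. -/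
/-!
Since `1` is a subgradient of `φ` at `0`, the secant slopes of `φ` are at most `1` on `(-∞, 0]`
and at least `1` on `[0, ∞)`. For `μ ≥ b` all arguments `(f - μ) / τ` are nonpositive, so raising
`μ` lowers `τ 𝔼[φ((f - μ) / τ)]` by at most what it adds to the term `μ`: the objective is
nondecreasing on `[b, ∞)`, and symmetrically nonincreasing on `(-∞, a]`. Clamping `μ` to `[a, b]`
therefore never increases the objective, so the two infima agree; this includes the case where the
objective is unbounded below, in which both `sInf`s are `0` by convention.
-/

open MeasureTheory

section Subgradient

variable {φ : ℝ → ℝ} {c z x y : ℝ}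

theorem ConvexOn.sub_le_mul_sub_of_le_of_le (hconv : ConvexOn ℝ Set.univ φ)
    (hsg : ∀ t, φ z + c * (t - z) ≤ φ t) (hxy : x ≤ y) (hyz : y ≤ z) :
    φ y - φ x ≤ c * (y - x) := by
  rcases hxy.eq_or_lt with rfl | hxy
  · simp
  rcases hyz.eq_or_lt with rfl | hyz
  · linarith [hsg x]
  have hslope := hconv.slope_mono_adjacent (Set.mem_univ x) (Set.mem_univ z) hxy hyz
  have hright : (φ z - φ y) / (z - y) ≤ c := by
    rw [div_le_iff₀ (sub_pos.2 hyz)]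
    linarith [hsg y]
  rw [← div_le_iff₀ (sub_pos.2 hxy)]
  exact hslope.trans hright

theorem ConvexOn.mul_sub_le_sub_of_le_of_le (hconv : ConvexOn ℝ Set.univ φ)
    (hsg : ∀ t, φ z + c * (t - z) ≤ φ t) (hzx : z ≤ x) (hxy : x ≤ y) :
    c * (y - x) ≤ φ y - φ x := by
  rcases hxy.eq_or_lt with rfl | hxy
  · simp
  rcases hzx.eq_or_lt with rfl | hzx
  · linarith [hsg y]
  have hslope := hconv.slope_mono_adjacent (Set.mem_univ z) (Set.mem_univ y) hzx hxy
  have hleft : c ≤ (φ x - φ z) / (x - z) := by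
    rw [le_div_iff₀ (sub_pos.2 hzx)]
    linarith [hsg x]
  rw [← le_div_iff₀ (sub_pos.2 hxy)]
  exact hleft.trans hslope

end Subgradient

theorem MeasureTheory.integral_le_integral_add_const {Ω : Type*} [MeasurableSpace Ω]
    {P : Measure Ω} [IsProbabilityMeasure P] {u v : Ω → ℝ} {c : ℝ}
    (hu : Integrable u P) (hv : Integrable v P) (h : ∀ ω, u ω ≤ v ω + c) :
    ∫ ω, u ω ∂P ≤ ∫ ω, v ω ∂P + c := by
  have hmono := integral_mono hu (hv.add (integrable_const c)) h
  rwa [Pi.add_def, integral_add hv (integrable_const c), integral_const, probReal_univ,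
    one_smul] at hmono

theorem Real.sInf_range_eq_sInf_image_of_forall_exists_le {α : Type*} {g : α → ℝ} {s : Set α}
    (hs : ∀ ν, ∃ μ ∈ s, g μ ≤ g ν) : sInf (Set.range g) = sInf (g '' s) := by
  have hlower : lowerBounds (g '' s) ⊆ lowerBounds (Set.range g) := by
    rintro m hm _ ⟨ν, rfl⟩
    obtain ⟨μ, hμs, hμν⟩ := hs ν
    exact (hm ⟨μ, hμs, rfl⟩).trans hμν
  rcases isEmpty_or_nonempty α with hα | ⟨⟨ν⟩⟩
  · simp [Set.range_eq_empty, Set.eq_empty_of_isEmpty s]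
  by_cases hbdd : BddBelow (Set.range g)
  · obtain ⟨μ, hμs, -⟩ := hs ν
    have hne : (g '' s).Nonempty := ⟨g μ, μ, hμs, rfl⟩
    have hsub := Set.image_subset_range g s
    exact le_antisymm (csInf_le_csInf hbdd hne hsub)
      (le_csInf ⟨g ν, ν, rfl⟩ (hlower (isGLB_csInf hne (hbdd.mono hsub)).1))
  · rw [Real.sInf_of_not_bddBelow hbdd, Real.sInf_of_not_bddBelow]
    exact fun ⟨m, hm⟩ => hbdd ⟨m, hlower hm⟩

noncomputable def oceObjective {Ω : Type*} [MeasurableSpace Ω] (P : Measure Ω) (φ : ℝ → ℝ)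
    (τ : ℝ) (f : Ω → ℝ) (μ : ℝ) : ℝ :=
  τ * ∫ ω, φ ((f ω - μ) / τ) ∂P + μ

section OCE

variable {Ω : Type*} [MeasurableSpace Ω] {P : Measure Ω} [IsProbabilityMeasure P]
  {φ : ℝ → ℝ} {τ : ℝ} {f : Ω → ℝ}

theorem oceObjective_le_of_forall_le_add (hτ : 0 < τ) {μ ν : ℝ}
    (hμ : Integrable (fun ω => φ ((f ω - μ) / τ)) P)
    (hν : Integrable (fun ω => φ ((f ω - ν) / τ)) P)
    (h : ∀ ω, φ ((f ω - ν) / τ) ≤ φ ((f ω - μ) / τ) + (μ - ν) / τ) :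
    oceObjective P φ τ f ν ≤ oceObjective P φ τ f μ := by
  have hintegral := integral_le_integral_add_const hν hμ h
  calc τ * ∫ ω, φ ((f ω - ν) / τ) ∂P + ν
      ≤ τ * (∫ ω, φ ((f ω - μ) / τ) ∂P + (μ - ν) / τ) + ν := by gcongr
    _ = τ * ∫ ω, φ ((f ω - μ) / τ) ∂P + μ := by field_simp; ring

theorem monotoneOn_oceObjective_Ici (hconv : ConvexOn ℝ Set.univ φ)
    (hφ0 : φ 0 = 0) (hsub : ∀ t, t ≤ φ t) (hτ : 0 < τ)
    (hint : ∀ μ, Integrable (fun ω => φ ((f ω - μ) / τ)) P) {b : ℝ} (hfb : ∀ ω, f ω ≤ b) :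
    MonotoneOn (oceObjective P φ τ f) (Set.Ici b) := by
  have hsg : ∀ t, φ 0 + 1 * (t - 0) ≤ φ t := fun t => by linarith [hsub t]
  intro μ hμ ν _ hμν
  refine oceObjective_le_of_forall_le_add hτ (hint ν) (hint μ) fun ω => ?_
  have hslope := hconv.sub_le_mul_sub_of_le_of_le hsg
    (x := (f ω - ν) / τ) (y := (f ω - μ) / τ) (by gcongr)
    (div_nonpos_of_nonpos_of_nonneg (by linarith [hfb ω, Set.mem_Ici.1 hμ]) hτ.le)
  have hdiff : (f ω - μ) / τ - (f ω - ν) / τ = (ν - μ) / τ := by ring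
  linarith

theorem antitoneOn_oceObjective_Iic (hconv : ConvexOn ℝ Set.univ φ)
    (hφ0 : φ 0 = 0) (hsub : ∀ t, t ≤ φ t) (hτ : 0 < τ)
    (hint : ∀ μ, Integrable (fun ω => φ ((f ω - μ) / τ)) P) {a : ℝ} (hfa : ∀ ω, a ≤ f ω) :
    AntitoneOn (oceObjective P φ τ f) (Set.Iic a) := by
  have hsg : ∀ t, φ 0 + 1 * (t - 0) ≤ φ t := fun t => by linarith [hsub t]
  intro μ _ ν hν hμν
  refine oceObjective_le_of_forall_le_add hτ (hint μ) (hint ν) fun ω => ?_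
  have hslope := hconv.mul_sub_le_sub_of_le_of_le hsg
    (x := (f ω - ν) / τ) (y := (f ω - μ) / τ)
    (div_nonneg (by linarith [hfa ω, Set.mem_Iic.1 hν]) hτ.le) (by gcongr)
  have hdiff : (f ω - μ) / τ - (f ω - ν) / τ = -((μ - ν) / τ) := by ring
  linarith

end OCE

theorem stmt2_general {Ω : Type*} [MeasurableSpace Ω] (P : Measure Ω) [IsProbabilityMeasure P]
    (φ : ℝ → ℝ) (hconv : ConvexOn ℝ Set.univ φ)
    (hφ0 : φ 0 = 0) (hsub : ∀ t : ℝ, t ≤ φ t)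
    (τ : ℝ) (hτ : 0 < τ) (a b : ℝ) (hab : a ≤ b)
    (f : Ω → ℝ) (hf : ∀ ω, f ω ∈ Set.Icc a b)
    (hint : ∀ μ : ℝ, Integrable (fun ω => φ ((f ω - μ)/τ)) P) :
    (sInf (Set.range fun μ : ℝ => τ * ∫ ω, φ ((f ω - μ)/τ) ∂P + μ)
      = sInf ((fun μ : ℝ => τ * ∫ ω, φ ((f ω - μ)/τ) ∂P + μ) '' Set.Icc a b)) ∧
    (∀ ε : ℝ, 0 < ε →
      τ * ∫ ω, φ ((f ω - b)/τ) ∂P + b ≤ τ * ∫ ω, φ ((f ω - (b+ε))/τ) ∂P + (b+ε)) ∧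
    (∀ ε : ℝ, 0 < ε →
      τ * ∫ ω, φ ((f ω - a)/τ) ∂P + a ≤ τ * ∫ ω, φ ((f ω - (a-ε))/τ) ∂P + (a-ε)) := by
  have hright := monotoneOn_oceObjective_Ici hconv hφ0 hsub hτ hint fun ω => (hf ω).2
  have hleft := antitoneOn_oceObjective_Iic hconv hφ0 hsub hτ hint fun ω => (hf ω).1
  refine ⟨Real.sInf_range_eq_sInf_image_of_forall_exists_le fun ν => ?_,
    fun ε hε => hright Set.self_mem_Ici (Set.mem_Ici.2 (by linarith)) (by linarith),
    fun ε hε => hleft (Set.mem_Iic.2 (by linarith)) Set.self_mem_Iic (by linarith)⟩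
  rcases le_total ν a with hνa | haν
  · exact ⟨a, Set.left_mem_Icc.2 hab, hleft hνa Set.self_mem_Iic hνa⟩
  rcases le_total ν b with hνb | hbν
  · exact ⟨ν, ⟨haν, hνb⟩, le_rfl⟩
  · exact ⟨b, Set.right_mem_Icc.2 hab, hright Set.self_mem_Ici hbν hbν⟩

/-- For a disutility function `φ` (nondecreasing, convex, `φ(0)=0`, `φ(t) ≥ t`),
`τ > 0`, and a random variable `f` taking values in `[a,b]`, the OCE objective
`λ(μ) = τ 𝔼[φ((f - μ)/τ)] + μ` attains the same infimum over `ℝ` as over `[a,b]`;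
in particular `λ(b+ε) ≥ λ(b)` and `λ(a-ε) ≥ λ(a)` for every `ε > 0`. -/
theorem stmt2 {Ω : Type*} [MeasurableSpace Ω] (P : Measure Ω) [IsProbabilityMeasure P]
    (φ : ℝ → ℝ) (hmono : Monotone φ) (hconv : ConvexOn ℝ Set.univ φ)
    (hφ0 : φ 0 = 0) (hsub : ∀ t : ℝ, t ≤ φ t)
    (τ : ℝ) (hτ : 0 < τ) (a b : ℝ) (hab : a ≤ b)
    (f : Ω → ℝ) (hf : ∀ ω, f ω ∈ Set.Icc a b) (hmeas : Measurable f)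
    (hint : ∀ μ : ℝ, Integrable (fun ω => φ ((f ω - μ)/τ)) P) :
    (sInf (Set.range fun μ : ℝ => τ * ∫ ω, φ ((f ω - μ)/τ) ∂P + μ)
      = sInf ((fun μ : ℝ => τ * ∫ ω, φ ((f ω - μ)/τ) ∂P + μ) '' Set.Icc a b)) ∧
    (∀ ε : ℝ, 0 < ε →
      τ * ∫ ω, φ ((f ω - b)/τ) ∂P + b ≤ τ * ∫ ω, φ ((f ω - (b+ε))/τ) ∂P + (b+ε)) ∧
    (∀ ε : ℝ, 0 < ε →
      τ * ∫ ω, φ ((f ω - a)/τ) ∂P + a ≤ τ * ∫ ω, φ ((f ω - (a-ε))/τ) ∂P + (a-ε)) :=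
  stmt2_general P φ hconv hφ0 hsub τ hτ a b hab f hf hint
end

section
/- Let $\mathcal{X},\mathcal{Y}$ be finite (or countable) spaces, and for each $x\in\mathcal{X}$ let $p_x^+$ and $p_x^-$ be probability mass functions on $\mathcal{Y}$ with $p_x^-(y)>0$ for all $y$. Define the AUC-type functional $\mathcal{E}(s) = \mathbb{E}_x\,\mathbb{E}_{y\sim p_x^+, y'\sim p_x^-}[\mathbb{I}[s(x,y)>s(x,y')] + \tfrac{1}{2}\mathbb{I}[s(x,y)=s(x,y')]]$. Then $\mathcal{E}(s) \le \mathcal{E}^* := \frac{1}{4}\mathbb{E}_x\,\mathbb{E}_{y,y'\sim p_x^-}\left[\frac{p_x^+(y)}{p_x^-(y)} + \frac{p_x^+(y')}{p_x^-(y')} + \left|\frac{p_x^+(y)}{p_x^-(y)} - \frac{p_x^+(y')}{p_x^-(y')}\right|\right]$ for every scoring function $s : \mathcal{X}\times\mathcal{Y} \to \mathbb{R}$. -/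
open Finset

/-- The AUC-type retrieval measure. -/
noncomputable def Escore {X Y : Type*} [Fintype X] [Fintype Y]
    (μX : X → ℝ) (pp pm : X → Y → ℝ) (s : X → Y → ℝ) : ℝ :=
  ∑ x, μX x * ∑ y, ∑ y', pp x y * pm x y' *
    ((if s x y > s x y' then (1:ℝ) else 0) + (1/2) * (if s x y = s x y' then (1:ℝ) else 0))

/-- Upper bound on the AUC-type measure:
`𝓔(s) ≤ 𝓔* = (1/4) 𝔼_x 𝔼_{y,y' ∼ p_x^-}[p⁺/p⁻(y) + p⁺/p⁻(y') + |p⁺/p⁻(y) - p⁺/p⁻(y')|]`. -/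
theorem stmt5 {X Y : Type*} [Fintype X] [Fintype Y]
    (μX : X → ℝ) (pp pm : X → Y → ℝ)
    (hμ : ∀ x, 0 ≤ μX x) (hμ1 : ∑ x, μX x = 1)
    (hpp : ∀ x y, 0 ≤ pp x y) (hpp1 : ∀ x, ∑ y, pp x y = 1)
    (hpm : ∀ x y, 0 < pm x y) (hpm1 : ∀ x, ∑ y, pm x y = 1)
    (s : X → Y → ℝ) :
    Escore μX pp pm s ≤
      (1/4) * ∑ x, μX x * ∑ y, ∑ y', pm x y * pm x y' *
        (pp x y / pm x y + pp x y' / pm x y'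
          + |pp x y / pm x y - pp x y' / pm x y'|) := by
  unfold Escore
  rw [Finset.mul_sum]
  apply Finset.sum_le_sum
  intro x _
  rw [show ∀ t : ℝ, (1/4) * (μX x * t) = μX x * ((1/4) * t) from fun t => by ring]
  apply mul_le_mul_of_nonneg_left _ (hμ x)
  set g : Y → Y → ℝ := fun y y' =>
    (if s x y > s x y' then (1:ℝ) else 0) + (1/2) * (if s x y = s x y' then (1:ℝ) else 0)
    with hg
  have hg0 : ∀ y y', 0 ≤ g y y' := by
    intro y y'
    simp only [hg]
    positivity
  have hg1 : ∀ y y', g y y' ≤ 1 := by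
    intro y y'
    simp only [hg]
    rcases lt_trichotomy (s x y) (s x y') with h | h | h <;>
      split_ifs <;> norm_num <;> (try linarith) <;> simp_all
  have hgsum : ∀ y y', g y y' + g y' y = 1 := by
    intro y y'
    simp only [hg]
    rcases lt_trichotomy (s x y) (s x y') with h | h | h <;>
      split_ifs <;> norm_num <;> (try linarith) <;> simp_all
  have key : ∀ (a b t : ℝ), 0 ≤ a → 0 ≤ b → 0 ≤ t → t ≤ 1 →
      a * t + b * (1 - t) ≤ (1/2) * (a + b + |a - b|) := by
    intro a b t ha hb ht0 ht1
    rcases abs_cases (a - b) with ⟨h, _⟩ | ⟨h, _⟩ <;> rw [h] <;> nlinarith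
  have hid : ∀ y, pm x y * (pp x y / pm x y) = pp x y := fun y =>
    mul_div_cancel₀ _ (hpm x y).ne'
  -- symmetrization identity
  have hL : (∑ y, ∑ y', pp x y * pm x y' * g y y')
      = (1/2) * ∑ y, ∑ y', pm x y * pm x y' *
          ((pp x y / pm x y) * g y y' + (pp x y' / pm x y') * (1 - g y y')) := by
    have hsplit : ∀ y y', pm x y * pm x y' *
          ((pp x y / pm x y) * g y y' + (pp x y' / pm x y') * (1 - g y y'))
        = pp x y * pm x y' * g y y' + pm x y * pp x y' * (1 - g y y') := by
      intro y y'
      have h1 := hid y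
      have h2 := hid y'
      calc pm x y * pm x y' * ((pp x y / pm x y) * g y y' + (pp x y' / pm x y') * (1 - g y y'))
          = (pm x y * (pp x y / pm x y)) * pm x y' * g y y'
            + pm x y * (pm x y' * (pp x y' / pm x y')) * (1 - g y y') := by ring
        _ = pp x y * pm x y' * g y y' + pm x y * pp x y' * (1 - g y y') := by rw [h1, h2]
    have hswap : (∑ y, ∑ y', pm x y * pp x y' * (1 - g y y'))
        = ∑ y, ∑ y', pp x y * pm x y' * g y y' := by
      rw [Finset.sum_comm]
      refine Finset.sum_congr rfl fun y _ => Finset.sum_congr rfl fun y' _ => ?_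
      have : 1 - g y' y = g y y' := by linarith [hgsum y y']
      rw [this]; ring
    simp only [hsplit, Finset.sum_add_distrib, hswap]
    ring
  rw [hL]
  rw [show ∀ t : ℝ, (1/4) * t = (1/2) * ((1/2) * t) from fun t => by ring]
  apply mul_le_mul_of_nonneg_left _ (by norm_num : (0:ℝ) ≤ 1/2)
  rw [Finset.mul_sum]
  apply Finset.sum_le_sum
  intro y _
  rw [Finset.mul_sum]
  apply Finset.sum_le_sum
  intro y' _
  rw [show ∀ t : ℝ, (1/2) * (pm x y * pm x y' * t) = pm x y * pm x y' * ((1/2) * t)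
    from fun t => by ring]
  apply mul_le_mul_of_nonneg_left _ (mul_pos (hpm x y) (hpm x y')).le
  exact key _ _ _ (div_nonneg (hpp x y) (hpm x y).le)
    (div_nonneg (hpp x y') (hpm x y').le) (hg0 y y') (hg1 y y')
end

section
/- Let $\mathcal{X},\mathcal{Y}$ be finite spaces, $\tau>0$, and for each $x$ let $p_x^+, p_x^-$ be probability mass functions on $\mathcal{Y}$ that are everywhere positive. Define the contrastive risk $\mathcal{L}(s) = \mathbb{E}_x\,\mathbb{E}_{y\sim p_x^+}\left[\tau \log \mathbb{E}_{y'\sim p_x^-} \exp\big((s(x,y')-s(x,y))/\tau\big)\right]$. Then for any scoring function $s$, $\mathcal{L}(s) - \mathcal{L}^* = \tau\,\mathbb{E}_x\, D_{\mathrm{KL}}(p_x^+ \,\|\, q_x^+)$, where $\mathcal{L}^* = \tau\,\mathbb{E}_x\mathbb{E}_{y\sim p_x^+}\log\frac{p_x^-(y)}{p_x^+(y)}$ and $q_x^+(y) = \frac{p_x^-(y)\exp(s(x,y)/\tau)}{\mathbb{E}_{y'\sim p_x^-}\exp(s(x,y')/\tau)}$. In particular $\mathcal{L}(s) \ge \mathcal{L}^*$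 for all $s$. -/
open Finset

/-- The contrastive population risk over finite spaces. -/
noncomputable def Lrisk {X Y : Type*} [Fintype X] [Fintype Y]
    (μX : X → ℝ) (pp pm : X → Y → ℝ) (τ : ℝ) (s : X → Y → ℝ) : ℝ :=
  ∑ x, μX x * ∑ y, pp x y *
    (τ * Real.log (∑ y', pm x y' * Real.exp ((s x y' - s x y)/τ)))

lemma gibbs {Y : Type*} [Fintype Y] (p q : Y → ℝ) (hp : ∀ y, 0 < p y)
    (hq : ∀ y, 0 < q y) (hp1 : ∑ y, p y = 1) (hq1 : ∑ y, q y = 1) :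
    0 ≤ ∑ y, p y * Real.log (p y / q y) := by
  have h : ∑ y, p y * Real.log (q y / p y) ≤ 0 := by
    calc ∑ y, p y * Real.log (q y / p y)
        ≤ ∑ y, p y * (q y / p y - 1) := by
          apply Finset.sum_le_sum
          intro y _
          exact mul_le_mul_of_nonneg_left
            (Real.log_le_sub_one_of_pos (div_pos (hq y) (hp y))) (hp y).le
      _ = ∑ y, (q y - p y) := by
          apply Finset.sum_congr rfl; intro y _
          rw [mul_sub, mul_div_cancel₀ _ (hp y).ne', mul_one]
      _ = 0 := by rw [Finset.sum_sub_distrib, hp1, hq1]; ring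
  have : ∑ y, p y * Real.log (p y / q y) = - ∑ y, p y * Real.log (q y / p y) := by
    rw [← Finset.sum_neg_distrib]
    apply Finset.sum_congr rfl; intro y _
    rw [show p y / q y = (q y / p y)⁻¹ by rw [inv_div], Real.log_inv]; ring
  rw [this]; linarith

/-- KL identity for the contrastive risk:
`𝓛(s) - 𝓛* = τ 𝔼_x D_KL(p_x^+ ‖ q_x^+)` with
`q_x^+(y) = p_x^-(y) e^{s(x,y)/τ} / 𝔼_{y'∼p_x^-} e^{s(x,y')/τ}` and
`𝓛* = τ 𝔼_x 𝔼_{y∼p_x^+} log(p_x^-(y)/p_x^+(y))`; in particular `𝓛(s) ≥ 𝓛*`. -/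
theorem stmt7 {X Y : Type*} [Fintype X] [Fintype Y] [Nonempty Y]
    (μX : X → ℝ) (pp pm : X → Y → ℝ) (τ : ℝ) (hτ : 0 < τ)
    (hμ : ∀ x, 0 ≤ μX x) (hμ1 : ∑ x, μX x = 1)
    (hpp : ∀ x y, 0 < pp x y) (hpp1 : ∀ x, ∑ y, pp x y = 1)
    (hpm : ∀ x y, 0 < pm x y) (hpm1 : ∀ x, ∑ y, pm x y = 1)
    (s : X → Y → ℝ) :
    (Lrisk μX pp pm τ s
        - τ * ∑ x, μX x * ∑ y, pp x y * Real.log (pm x y / pp x y)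
      = τ * ∑ x, μX x * ∑ y, pp x y *
          Real.log (pp x y /
            (pm x y * Real.exp (s x y / τ)
              / (∑ y', pm x y' * Real.exp (s x y' / τ))))) ∧
    (τ * ∑ x, μX x * ∑ y, pp x y * Real.log (pm x y / pp x y)
      ≤ Lrisk μX pp pm τ s) := by
  set Z : X → ℝ := fun x => ∑ y', pm x y' * Real.exp (s x y' / τ) with hZ
  have hZpos : ∀ x, 0 < Z x := fun x =>
    Finset.sum_pos (fun y _ => mul_pos (hpm x y) (Real.exp_pos _)) univ_nonempty
  have hS : ∀ x y, (∑ y', pm x y' * Real.exp ((s x y' - s x y)/τ))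
      = Z x * Real.exp (-(s x y)/τ) := by
    intro x y
    rw [hZ, Finset.sum_mul]
    apply Finset.sum_congr rfl; intro y' _
    rw [mul_assoc, ← Real.exp_add]
    ring_nf
  -- q pmf
  set q : X → Y → ℝ := fun x y => pm x y * Real.exp (s x y / τ) / Z x with hq
  have hqpos : ∀ x y, 0 < q x y := fun x y =>
    div_pos (mul_pos (hpm x y) (Real.exp_pos _)) (hZpos x)
  have hq1 : ∀ x, ∑ y, q x y = 1 := by
    intro x
    simp only [hq]
    rw [← Finset.sum_div]
    exact div_self (hZpos x).ne'
  have key : ∀ x y,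
      τ * Real.log (∑ y', pm x y' * Real.exp ((s x y' - s x y)/τ))
        - τ * Real.log (pm x y / pp x y)
      = τ * Real.log (pp x y / q x y) := by
    intro x y
    have hq' : q x y = pm x y * Real.exp (s x y / τ) / Z x := rfl
    rw [hS x y, Real.log_mul (hZpos x).ne' (Real.exp_pos _).ne', Real.log_exp,
      Real.log_div (hpm x y).ne' (hpp x y).ne',
      hq', Real.log_div (hpp x y).ne'
        (div_pos (mul_pos (hpm x y) (Real.exp_pos _)) (hZpos x)).ne',
      Real.log_div (mul_pos (hpm x y) (Real.exp_pos _)).ne' (hZpos x).ne',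
      Real.log_mul (hpm x y).ne' (Real.exp_pos _).ne', Real.log_exp]
    ring
  have keysum : ∀ x,
      (∑ y, pp x y * (τ * Real.log (∑ y', pm x y' * Real.exp ((s x y' - s x y)/τ))))
        - τ * ∑ y, pp x y * Real.log (pm x y / pp x y)
      = τ * ∑ y, pp x y * Real.log (pp x y / q x y) := by
    intro x
    rw [Finset.mul_sum, Finset.mul_sum, ← Finset.sum_sub_distrib]
    apply Finset.sum_congr rfl; intro y _
    linear_combination pp x y * key x y
  have main : Lrisk μX pp pm τ s
      - τ * ∑ x, μX x * ∑ y, pp x y * Real.log (pm x y / pp x y)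
      = τ * ∑ x, μX x * ∑ y, pp x y * Real.log (pp x y / q x y) := by
    unfold Lrisk
    rw [Finset.mul_sum, Finset.mul_sum, ← Finset.sum_sub_distrib]
    apply Finset.sum_congr rfl; intro x _
    linear_combination μX x * keysum x
  constructor
  · exact main
  · have h2 : 0 ≤ τ * ∑ x, μX x * ∑ y, pp x y * Real.log (pp x y / q x y) := by
      apply mul_nonneg hτ.le
      apply Finset.sum_nonneg; intro x _
      exact mul_nonneg (hμ x) (gibbs _ _ (hpp x) (hqpos x) (hpp1 x) (hq1 x))
    linarith [main]
end

section
/- With $\mathcal{L}$, $\mathcal{L}^*$ as defined for the contrastive risk over finite spaces, a scoring function $s:\mathcal{X}\times\mathcal{Y}\to\mathbb{R}$ satisfies $\mathcal{L}(s) = \mathcal{L}^*$ if and only if there exists a function $g:\mathcal{X}\to\mathbb{R}$ such that $s(x,y) = \tau \log\frac{p_x^+(y)}{p_x^-(y)} + g(x)$ for all $x\in\mathcal{X}$, $y\in\mathcal{Y}$. -/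
open Finset

/-- Characterization of minimizers of the contrastive risk: `𝓛(s) = 𝓛*` iff
`s(x,y) = τ log(p_x^+(y)/p_x^-(y)) + g(x)` for some function `g : 𝒳 → ℝ`. -/
theorem stmt8 {X Y : Type*} [Fintype X] [Fintype Y] [Nonempty Y]
    (μX : X → ℝ) (pp pm : X → Y → ℝ) (τ : ℝ) (hτ : 0 < τ)
    (hμ : ∀ x, 0 < μX x) (hμ1 : ∑ x, μX x = 1)
    (hpp : ∀ x y, 0 < pp x y) (hpp1 : ∀ x, ∑ y, pp x y = 1)
    (hpm : ∀ x y, 0 < pm x y) (hpm1 : ∀ x, ∑ y, pm x y = 1)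
    (s : X → Y → ℝ) :
    Lrisk μX pp pm τ s
        = τ * ∑ x, μX x * ∑ y, pp x y * Real.log (pm x y / pp x y) ↔
      ∃ g : X → ℝ, ∀ x y, s x y = τ * Real.log (pp x y / pm x y) + g x := by
  have hτ' : τ ≠ 0 := hτ.ne'
  set Z : X → ℝ := fun x => ∑ y', pm x y' * Real.exp (s x y' / τ) with hZdef
  have hZpos : ∀ x, 0 < Z x := fun x =>
    Finset.sum_pos (fun y _ => mul_pos (hpm x y) (Real.exp_pos _)) univ_nonempty
  set t : X → Y → ℝ := fun x y => pm x y * Real.exp (s x y / τ) / (Z x * pp x y) with htdef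
  have htpos : ∀ x y, 0 < t x y := fun x y =>
    div_pos (mul_pos (hpm x y) (Real.exp_pos _)) (mul_pos (hZpos x) (hpp x y))
  have hlogt : ∀ x y, Real.log (t x y)
      = Real.log (pm x y) + s x y / τ - Real.log (Z x) - Real.log (pp x y) := by
    intro x y
    rw [htdef]
    simp only
    rw [Real.log_div (mul_pos (hpm x y) (Real.exp_pos _)).ne'
          (mul_pos (hZpos x) (hpp x y)).ne',
        Real.log_mul (hpm x y).ne' (Real.exp_pos _).ne',
        Real.log_mul (hZpos x).ne' (hpp x y).ne', Real.log_exp]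
    ring
  have hpt : ∀ x, ∑ y, pp x y * t x y = 1 := by
    intro x
    have h1 : ∀ y ∈ (univ : Finset Y),
        pp x y * t x y = pm x y * Real.exp (s x y / τ) / Z x := by
      intro y _
      rw [htdef]
      simp only
      field_simp [(hpp x y).ne', (hZpos x).ne']
    rw [Finset.sum_congr rfl h1, ← Finset.sum_div]
    show Z x / Z x = 1
    exact div_self (hZpos x).ne'
  have hlogin : ∀ x y, Real.log (∑ y', pm x y' * Real.exp ((s x y' - s x y)/τ))
      = Real.log (Z x) - s x y / τ := by
    intro x y
    have hinner : (∑ y', pm x y' * Real.exp ((s x y' - s x y)/τ))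
        = Z x * Real.exp (-(s x y) / τ) := by
      rw [hZdef]
      simp only
      rw [Finset.sum_mul]
      refine Finset.sum_congr rfl fun y' _ => ?_
      rw [mul_assoc, ← Real.exp_add]
      congr 1
      ring
    rw [hinner, Real.log_mul (hZpos x).ne' (Real.exp_pos _).ne', Real.log_exp]
    ring
  -- key identity : Lrisk = L* + divergence
  have key : Lrisk μX pp pm τ s
      = τ * ∑ x, μX x * ∑ y, pp x y * Real.log (pm x y / pp x y)
        + ∑ x, μX x * ∑ y, pp x y * (τ * ((t x y - 1) - Real.log (t x y))) := by
    unfold Lrisk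
    rw [Finset.mul_sum, ← Finset.sum_add_distrib]
    refine Finset.sum_congr rfl fun x _ => ?_
    rw [show τ * (μX x * ∑ y, pp x y * Real.log (pm x y / pp x y))
          = μX x * (τ * ∑ y, pp x y * Real.log (pm x y / pp x y)) from by ring, ← mul_add]
    congr 1
    have h2 : ∑ y, pp x y * (τ * ((t x y - 1) - Real.log (t x y)))
        = τ * (∑ y, pp x y * t x y) - τ * (∑ y, pp x y)
          + ∑ y, pp x y * (τ * (- Real.log (t x y))) := by
      rw [Finset.mul_sum, Finset.mul_sum, ← Finset.sum_sub_distrib, ← Finset.sum_add_distrib]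
      refine Finset.sum_congr rfl fun y _ => ?_
      ring
    rw [h2, hpt x, hpp1 x, sub_self, zero_add, Finset.mul_sum, ← Finset.sum_add_distrib]
    refine Finset.sum_congr rfl fun y _ => ?_
    rw [hlogin x y, hlogt x y, Real.log_div (hpm x y).ne' (hpp x y).ne']
    ring
  have hterm_nonneg : ∀ x y, 0 ≤ pp x y * (τ * ((t x y - 1) - Real.log (t x y))) :=
    fun x y => mul_nonneg (hpp x y).le (mul_nonneg hτ.le
      (sub_nonneg.2 (Real.log_le_sub_one_of_pos (htpos x y))))
  have hS_nonneg : ∀ x, 0 ≤ ∑ y, pp x y * (τ * ((t x y - 1) - Real.log (t x y))) :=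
    fun x => Finset.sum_nonneg fun y _ => hterm_nonneg x y
  constructor
  · intro h
    have hzero : ∑ x, μX x * ∑ y, pp x y * (τ * ((t x y - 1) - Real.log (t x y))) = 0 := by
      rw [h] at key
      linarith
    have ht1 : ∀ x y, t x y = 1 := by
      intro x y
      have hx := (Finset.sum_eq_zero_iff_of_nonneg
        (fun x _ => mul_nonneg (hμ x).le (hS_nonneg x))).mp hzero x (mem_univ x)
      have hSx : ∑ y, pp x y * (τ * ((t x y - 1) - Real.log (t x y))) = 0 := by
        rcases mul_eq_zero.mp hx with h' | h'
        · exact absurd h' (hμ x).ne'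
        · exact h'
      have hy := (Finset.sum_eq_zero_iff_of_nonneg
        (fun y _ => hterm_nonneg x y)).mp hSx y (mem_univ y)
      have hE : (t x y - 1) - Real.log (t x y) = 0 := by
        rcases mul_eq_zero.mp hy with h' | h'
        · exact absurd h' (hpp x y).ne'
        · rcases mul_eq_zero.mp h' with h'' | h''
          · exact absurd h'' hτ'
          · exact h''
      by_contra hne
      have := Real.log_lt_sub_one_of_pos (htpos x y) hne
      linarith
    refine ⟨fun x => τ * Real.log (Z x), fun x y => ?_⟩
    have h1 : pm x y * Real.exp (s x y / τ) = Z x * pp x y := by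
      have := ht1 x y
      rw [htdef] at this
      simp only at this
      exact (div_eq_one_iff_eq (mul_pos (hZpos x) (hpp x y)).ne').mp this
    have h2 : Real.exp (s x y / τ) = Z x * pp x y / pm x y := by
      rw [eq_div_iff (hpm x y).ne']
      linarith [h1]
    have h3 : s x y / τ = Real.log (Z x * pp x y / pm x y) := by
      rw [← h2, Real.log_exp]
    have h4 : s x y = τ * (s x y / τ) := by field_simp
    rw [h4, h3, Real.log_div (mul_pos (hZpos x) (hpp x y)).ne' (hpm x y).ne',
        Real.log_mul (hZpos x).ne' (hpp x y).ne',
        Real.log_div (hpp x y).ne' (hpm x y).ne']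
    ring
  · rintro ⟨g, hg⟩
    have hs_exp : ∀ x y, Real.exp (s x y / τ)
        = (pp x y / pm x y) * Real.exp (g x / τ) := by
      intro x y
      rw [hg x y, add_div, Real.exp_add]
      congr 1
      rw [mul_comm τ, mul_div_assoc, div_self hτ', mul_one,
          Real.exp_log (div_pos (hpp x y) (hpm x y))]
    have hZx : ∀ x, Z x = Real.exp (g x / τ) := by
      intro x
      rw [hZdef]
      simp only
      have h1 : ∀ y ∈ (univ : Finset Y),
          pm x y * Real.exp (s x y / τ) = pp x y * Real.exp (g x / τ) := by
        intro y _
        rw [hs_exp x y]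
        field_simp [(hpm x y).ne']
      rw [Finset.sum_congr rfl h1, ← Finset.sum_mul, hpp1 x, one_mul]
    have ht1 : ∀ x y, t x y = 1 := by
      intro x y
      rw [htdef]
      simp only
      rw [hs_exp x y, hZx x]
      field_simp [(hpm x y).ne', (hpp x y).ne', Real.exp_ne_zero]
    rw [key]
    have : ∀ x ∈ (univ : Finset X),
        μX x * ∑ y, pp x y * (τ * ((t x y - 1) - Real.log (t x y))) = 0 := by
      intro x _
      have : ∀ y ∈ (univ : Finset Y),
          pp x y * (τ * ((t x y - 1) - Real.log (t x y))) = 0 := by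
        intro y _
        rw [ht1 x y]
        simp
      rw [Finset.sum_congr rfl this]
      simp
    rw [Finset.sum_congr rfl this]
    simp
end

section
/- (Calibration inequality for contrastive learning.) Let $\mathcal{X},\mathcal{Y}$ be finite spaces, $\tau>0$, and suppose for each $x$ the mass functions $p_x^+, p_x^-$ are everywhere positive. Then for every scoring function $s:\mathcal{X}\times\mathcal{Y}\to\mathbb{R}$, $\mathcal{E}^* - \mathcal{E}(s) \le \sqrt{2/\tau}\,\sqrt{\mathcal{L}(s) - \mathcal{L}^*}$, where $\mathcal{E}$ is the AUC-type retrieval measure with supremum $\mathcal{E}^*$, and $\mathcal{L}$ is the contrastive risk with infimum $\mathcal{L}^*$. -/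
/-!
Fix `x` and write `q⁺ₓ ∝ p⁻ₓ exp(s(x, ·) / τ)`. The AUC is linear in `p⁺ₓ` with `[0, 1]`-valued
weights, and `s(x, ·)` ranks exactly like the likelihood ratio `q⁺ₓ / p⁻ₓ`, so it is a Bayes-optimal
ranking for `q⁺ₓ`. Comparing with the likelihood-ratio score `p⁺ₓ / p⁻ₓ`, which attains `𝓔*`,
therefore bounds the AUC gap at `x` by `‖p⁺ₓ - q⁺ₓ‖₁ ≤ √(2 KL(p⁺ₓ ‖ q⁺ₓ))` (Pinsker). Jensen moves
the square root outside `𝔼ₓ`, and `𝓛(s) - 𝓛* = τ 𝔼ₓ KL(p⁺ₓ ‖ q⁺ₓ)` because `q⁺ₓ = p⁺ₓ` for the score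
`τ log (p⁺ₓ / p⁻ₓ)`.
-/

open Finset

open Real

noncomputable def winScore (p q : ℝ) : ℝ :=
  (if p > q then (1:ℝ) else 0) + (1/2) * (if p = q then (1:ℝ) else 0)

lemma winScore_of_gt {p q : ℝ} (h : q < p) : winScore p q = 1 := by
  simp [winScore, h, h.ne']

lemma winScore_of_eq {p q : ℝ} (h : p = q) : winScore p q = 1/2 := by
  simp [winScore, h]

lemma winScore_of_lt {p q : ℝ} (h : p < q) : winScore p q = 0 := by
  simp [winScore, h.not_gt, h.ne]

lemma winScore_nonneg (p q : ℝ) : 0 ≤ winScore p q := by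
  unfold winScore; split_ifs <;> norm_num

lemma winScore_le_one (p q : ℝ) : winScore p q ≤ 1 := by
  rcases lt_trichotomy p q with h | h | h
  · rw [winScore_of_lt h]; norm_num
  · rw [winScore_of_eq h]; norm_num
  · rw [winScore_of_gt h]

lemma winScore_add_winScore_swap (p q : ℝ) : winScore p q + winScore q p = 1 := by
  rcases lt_trichotomy p q with h | h | h
  · rw [winScore_of_lt h, winScore_of_gt h]; norm_num
  · rw [winScore_of_eq h, winScore_of_eq h.symm]; norm_num
  · rw [winScore_of_gt h, winScore_of_lt h]; norm_num

lemma winScore_comp_strictMono {f : ℝ → ℝ} (hf : StrictMono f) (p q : ℝ) :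
    winScore (f p) (f q) = winScore p q := by
  simp only [winScore, gt_iff_lt, hf.lt_iff_lt, hf.injective.eq_iff]

lemma mul_winScore_le_mul_winScore_div {a a' b b' : ℝ} (hb : 0 < b) (hb' : 0 < b') (p q : ℝ) :
    (a * b' - a' * b) * winScore p q ≤ (a * b' - a' * b) * winScore (a / b) (a' / b') := by
  have h0 := winScore_nonneg p q
  have h1 := winScore_le_one p q
  rcases lt_trichotomy (a / b) (a' / b') with h | h | h
  · rw [winScore_of_lt h]
    rw [div_lt_div_iff₀ hb hb'] at h
    nlinarith
  · rw [div_eq_div_iff hb.ne' hb'.ne'] at h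
    rw [h, sub_self, zero_mul, zero_mul]
  · rw [winScore_of_gt h]
    rw [div_lt_div_iff₀ hb' hb] at h
    nlinarith

section Auc

variable {Y : Type*} [Fintype Y]

noncomputable def auc (a b u : Y → ℝ) : ℝ :=
  ∑ y, ∑ y', a y * b y' * winScore (u y) (u y')

lemma Escore_eq_sum_auc {X : Type*} [Fintype X] (μX : X → ℝ) (pp pm s : X → Y → ℝ) :
    Escore μX pp pm s = ∑ x, μX x * auc (pp x) (pm x) (s x) := rfl

lemma auc_eq_sum_mul (a b u : Y → ℝ) :
    auc a b u = ∑ y, a y * ∑ y', b y' * winScore (u y) (u y') := by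
  simp only [auc, mul_sum, mul_assoc]

lemma auc_comp_strictMono (a b u : Y → ℝ) {f : ℝ → ℝ} (hf : StrictMono f) :
    auc a b (f ∘ u) = auc a b u := by
  simp only [auc, Function.comp_apply, winScore_comp_strictMono hf]

lemma two_mul_auc (a b u : Y → ℝ) :
    2 * auc a b u = ∑ y, ∑ y', (a y * b y' - a y' * b y) * winScore (u y) (u y')
      + ∑ y, ∑ y', a y' * b y := by
  have hswap : auc a b u = ∑ y, ∑ y', a y' * b y * winScore (u y') (u y) := sum_comm
  rw [two_mul]
  nth_rewrite 2 [hswap]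
  simp only [auc, ← sum_add_distrib]
  refine sum_congr rfl fun y _ => sum_congr rfl fun y' _ => ?_
  linear_combination (a y' * b y) * winScore_add_winScore_swap (u y') (u y)

lemma auc_le_auc_div (a : Y → ℝ) {b : Y → ℝ} (hb : ∀ y, 0 < b y) (u : Y → ℝ) :
    auc a b u ≤ auc a b (fun y => a y / b y) := by
  suffices 2 * auc a b u ≤ 2 * auc a b (fun y => a y / b y) by linarith
  rw [two_mul_auc, two_mul_auc]
  exact add_le_add_left (sum_le_sum fun y _ => sum_le_sum fun y' _ =>
    mul_winScore_le_mul_winScore_div (hb y) (hb y') (u y) (u y')) _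

/-- The AUC is linear in the positive distribution, with `[0, 1]`-valued weights. -/
lemma auc_sub_auc_le {b : Y → ℝ} (hb : ∀ y, 0 ≤ b y) (hb1 : ∑ y, b y = 1) (a c u v : Y → ℝ) :
    auc a b v - auc a b u ≤ ∑ y, |a y - c y| + (auc c b v - auc c b u) := by
  set w : (Y → ℝ) → Y → ℝ := fun u y => ∑ y', b y' * winScore (u y) (u y')
  have hw : ∀ u y, 0 ≤ w u y ∧ w u y ≤ 1 := fun u y =>
    ⟨sum_nonneg fun y' _ => mul_nonneg (hb y') (winScore_nonneg _ _),
      hb1 ▸ sum_le_sum fun y' _ => mul_le_of_le_one_right (hb y') (winScore_le_one _ _)⟩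
  have key : auc a b v - auc a b u - (auc c b v - auc c b u)
      = ∑ y, (a y - c y) * (w v y - w u y) := by
    simp only [auc_eq_sum_mul, ← sum_sub_distrib]
    exact sum_congr rfl fun y _ => by ring
  have hterm : ∀ y, (a y - c y) * (w v y - w u y) ≤ |a y - c y| := fun y => by
    have hd : |w v y - w u y| ≤ 1 := abs_sub_le_iff.2
      ⟨by linarith [hw v y, hw u y], by linarith [hw v y, hw u y]⟩
    calc (a y - c y) * (w v y - w u y) ≤ |a y - c y| * |w v y - w u y| := by
          rw [← abs_mul]; exact le_abs_self _
      _ ≤ |a y - c y| := mul_le_of_le_one_right (abs_nonneg _) hd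
  linarith [sum_le_sum fun y (_ : y ∈ univ) => hterm y]

end Auc

section Gibbs

variable {Y : Type*} [Fintype Y]

/-- The paper's `q⁺ₓ`, for `b = p⁻ₓ` and `u = s(x, ·)`. -/
noncomputable def gibbs_s10 (b : Y → ℝ) (τ : ℝ) (u : Y → ℝ) (y : Y) : ℝ :=
  b y * exp (u y / τ) / ∑ y', b y' * exp (u y' / τ)

lemma sum_mul_exp_pos {b : Y → ℝ} (hb : ∀ y, 0 < b y) (τ : ℝ) (u : Y → ℝ) (y : Y) :
    0 < ∑ y', b y' * exp (u y' / τ) :=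
  sum_pos (fun y' _ => mul_pos (hb y') (exp_pos _)) ⟨y, mem_univ y⟩

lemma gibbs_pos {b : Y → ℝ} (hb : ∀ y, 0 < b y) (τ : ℝ) (u : Y → ℝ) (y : Y) :
    0 < gibbs_s10 b τ u y :=
  div_pos (mul_pos (hb y) (exp_pos _)) (sum_mul_exp_pos hb τ u y)

lemma sum_gibbs [Nonempty Y] {b : Y → ℝ} (hb : ∀ y, 0 < b y) (τ : ℝ) (u : Y → ℝ) :
    ∑ y, gibbs_s10 b τ u y = 1 := by
  simp only [gibbs_s10, ← sum_div]
  exact div_self (sum_mul_exp_pos hb τ u (Classical.arbitrary Y)).ne'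

lemma div_gibbs {b : Y → ℝ} (hb : ∀ y, 0 < b y) (τ : ℝ) (u : Y → ℝ) (y : Y) :
    b y / gibbs_s10 b τ u y = ∑ y', b y' * exp ((u y' - u y) / τ) := by
  simp only [gibbs_s10, sub_div, exp_sub, mul_div_assoc', ← sum_div]
  field_simp [(hb y).ne']

lemma gibbs_log_div {τ : ℝ} (hτ : τ ≠ 0) {a b : Y → ℝ} (ha : ∀ y, 0 < a y) (ha1 : ∑ y, a y = 1)
    (hb : ∀ y, 0 < b y) : gibbs_s10 b τ (fun y => τ * log (a y / b y)) = a := by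
  have hexp : ∀ y, b y * exp (τ * log (a y / b y) / τ) = a y := fun y => by
    rw [mul_div_cancel_left₀ _ hτ, exp_log (div_pos (ha y) (hb y)), mul_div_cancel₀ _ (hb y).ne']
  ext y
  simp only [gibbs_s10, hexp, ha1, div_one]

/-- `gibbs b τ u / b` is a strictly increasing function of `u`. -/
lemma auc_gibbs_le {τ : ℝ} (hτ : 0 < τ) {b : Y → ℝ} (hb : ∀ y, 0 < b y) (u v : Y → ℝ) :
    auc (gibbs_s10 b τ u) b v ≤ auc (gibbs_s10 b τ u) b u := by
  rcases isEmpty_or_nonempty Y with hY | ⟨⟨y₀⟩⟩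
  · simp [auc]
  have hZ := sum_mul_exp_pos hb τ u y₀
  have hratio : (fun y => gibbs_s10 b τ u y / b y)
      = (fun r => exp (r / τ) / ∑ y', b y' * exp (u y' / τ)) ∘ u := by
    ext y
    simp only [gibbs_s10, Function.comp_apply]
    field_simp [(hb y).ne']
  have hmono : StrictMono fun r => exp (r / τ) / ∑ y', b y' * exp (u y' / τ) := fun r r' h =>
    div_lt_div_of_pos_right (exp_lt_exp.2 (div_lt_div_of_pos_right h hτ)) hZ
  calc auc (gibbs_s10 b τ u) b v ≤ auc (gibbs_s10 b τ u) b (fun y => gibbs_s10 b τ u y / b y) :=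
        auc_le_auc_div _ hb v
    _ = auc (gibbs_s10 b τ u) b u := by rw [hratio, auc_comp_strictMono _ _ _ hmono]

lemma auc_div_sub_auc_le {τ : ℝ} (hτ : 0 < τ) (a : Y → ℝ) {b : Y → ℝ} (hb : ∀ y, 0 < b y)
    (hb1 : ∑ y, b y = 1) (u : Y → ℝ) :
    auc a b (fun y => a y / b y) - auc a b u ≤ ∑ y, |a y - gibbs_s10 b τ u y| := by
  linarith [auc_sub_auc_le (fun y => (hb y).le) hb1 a (gibbs_s10 b τ u) u (fun y => a y / b y),
    auc_gibbs_le hτ hb u (fun y => a y / b y)]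

end Gibbs

open Set in
lemma apply_one_le_of_hasDerivAt {f f' : ℝ → ℝ} (hf : ∀ t ∈ Ioi (0 : ℝ), HasDerivAt f (f' t) t)
    (hf' : ∀ t ∈ Ioi (0 : ℝ), 0 ≤ (t - 1) * f' t) {t : ℝ} (ht : 0 < t) : f 1 ≤ f t := by
  have hcont : ContinuousOn f (Ioi 0) := fun x hx => (hf x hx).continuousAt.continuousWithinAt
  rcases le_total 1 t with h | h
  · refine monotoneOn_of_hasDerivWithinAt_nonneg (f' := f') (convex_Ici 1)
      (hcont.mono fun x (hx : 1 ≤ x) => mem_Ioi.2 (zero_lt_one.trans_le hx))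
      (fun x hx => ?_) (fun x hx => ?_) self_mem_Ici h h
    all_goals rw [interior_Ici] at hx
    · exact (hf x (mem_Ioi.2 (zero_lt_one.trans hx))).hasDerivWithinAt
    · nlinarith [hf' x (mem_Ioi.2 (zero_lt_one.trans hx)), mem_Ioi.1 hx]
  · refine antitoneOn_of_hasDerivWithinAt_nonpos (f' := f') (convex_Icc t 1)
      (hcont.mono fun x hx => ht.trans_le hx.1) (fun x hx => ?_) (fun x hx => ?_)
      ⟨le_rfl, h⟩ ⟨h, le_rfl⟩ h
    all_goals rw [interior_Icc] at hx
    · exact (hf x (ht.trans hx.1)).hasDerivWithinAt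
    · nlinarith [hf' x (ht.trans hx.1), hx.2]

open InformationTheory Set in
lemma three_mul_sq_sub_one_le_klFun {t : ℝ} (ht : 0 < t) :
    3 * (t - 1) ^ 2 ≤ (2 * t + 4) * klFun t := by
  set h : ℝ → ℝ := fun t => (t + 1) * log t - 2 * (t - 1)
  have hh : ∀ t ∈ Ioi (0 : ℝ), HasDerivAt h (log t + t⁻¹ - 1) t := fun t ht => by
    have := (((hasDerivAt_id' t).add_const 1).mul (hasDerivAt_log (mem_Ioi.1 ht).ne')).sub
      (((hasDerivAt_id' t).sub_const 1).const_mul 2)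
    exact this.congr_deriv (by field_simp [(mem_Ioi.1 ht).ne']; ring)
  have hh_mono : MonotoneOn h (Ioi 0) := monotoneOn_of_hasDerivWithinAt_nonneg (convex_Ioi 0)
    (fun x hx => (hh x hx).continuousAt.continuousWithinAt)
    (fun x hx => (hh x (interior_subset hx)).hasDerivWithinAt)
    (fun x hx => by linarith [one_sub_inv_le_log_of_pos (interior_subset hx : (0 : ℝ) < x)])
  have hh_sign : ∀ t ∈ Ioi (0 : ℝ), 0 ≤ (t - 1) * (4 * h t) := fun t ht => by
    have h1 : h 1 = 0 := by simp [h]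
    rcases le_total 1 t with hle | hle
    · nlinarith [hh_mono (mem_Ioi.2 one_pos) ht hle]
    · nlinarith [hh_mono ht (mem_Ioi.2 one_pos) hle]
  have hg : ∀ t ∈ Ioi (0 : ℝ),
      HasDerivAt (fun t => (2 * t + 4) * klFun t - 3 * (t - 1) ^ 2) (4 * h t) t := fun t ht => by
    have := ((((hasDerivAt_id' t).const_mul 2).add_const 4).mul
      (hasDerivAt_klFun (mem_Ioi.1 ht).ne')).sub
      ((((hasDerivAt_id' t).sub_const 1).pow 2).const_mul 3)
    exact this.congr_deriv (by simp only [h, klFun_apply]; norm_num; ring)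
  have := apply_one_le_of_hasDerivAt hg hh_sign ht
  norm_num [klFun_one] at this
  linarith

section KL

variable {Y : Type*} [Fintype Y]

noncomputable def kl (p q : Y → ℝ) : ℝ := ∑ y, p y * log (p y / q y)

lemma kl_self (p : Y → ℝ) : kl p p = 0 := by
  refine sum_eq_zero fun y _ => ?_
  rcases eq_or_ne (p y) 0 with h | h <;> simp [h]

open InformationTheory in
lemma kl_eq_sum_mul_klFun {p q : Y → ℝ} (hq : ∀ y, 0 < q y) (hpq : ∑ y, p y = ∑ y, q y) :
    kl p q = ∑ y, q y * klFun (p y / q y) := by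
  have hterm : ∀ y, q y * klFun (p y / q y) = p y * log (p y / q y) + q y - p y := fun y => by
    rw [klFun_apply]; field_simp [(hq y).ne']
  simp only [hterm, sum_sub_distrib, sum_add_distrib, hpq, add_sub_cancel_right, kl]

open InformationTheory in
lemma kl_nonneg {p q : Y → ℝ} (hp : ∀ y, 0 ≤ p y) (hq : ∀ y, 0 < q y)
    (hpq : ∑ y, p y = ∑ y, q y) : 0 ≤ kl p q := by
  rw [kl_eq_sum_mul_klFun hq hpq]
  exact sum_nonneg fun y _ => mul_nonneg (hq y).le (klFun_nonneg (div_nonneg (hp y) (hq y).le))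

open InformationTheory in
/-- Pinsker's inequality. Cauchy–Schwarz against the weights `(2p + 4q)/3`, which sum to `2`,
reduces it to `three_mul_sq_sub_one_le_klFun`. -/
theorem sum_abs_sub_le_sqrt_two_mul_kl {p q : Y → ℝ} (hp : ∀ y, 0 < p y) (hq : ∀ y, 0 < q y)
    (hp1 : ∑ y, p y = 1) (hq1 : ∑ y, q y = 1) :
    ∑ y, |p y - q y| ≤ sqrt (2 * kl p q) := by
  set c : Y → ℝ := fun y => (2 * p y + 4 * q y) / 3
  set k : Y → ℝ := fun y => q y * klFun (p y / q y)
  have hc : ∀ y, 0 ≤ c y := fun y => by have := hp y; have := hq y; positivity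
  have hk : ∀ y, 0 ≤ k y := fun y =>
    mul_nonneg (hq y).le (klFun_nonneg (div_nonneg (hp y).le (hq y).le))
  have hcsum : ∑ y, c y = 2 := by
    simp only [c, ← sum_div, sum_add_distrib, ← mul_sum, hp1, hq1]; norm_num
  have hpointwise : ∀ y, |p y - q y| ≤ sqrt (c y) * sqrt (k y) := fun y => by
    rw [← sqrt_mul (hc y), ← sqrt_sq_eq_abs]
    apply sqrt_le_sqrt
    have hck : c y * k y = q y ^ 2 * ((2 * (p y / q y) + 4) * klFun (p y / q y)) / 3 := by
      simp only [c, k]; field_simp [(hq y).ne']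
    have hsq : (p y - q y) ^ 2 = q y ^ 2 * (3 * (p y / q y - 1) ^ 2) / 3 := by
      field_simp [(hq y).ne']
    rw [hck, hsq]
    gcongr q y ^ 2 * ?_ / 3
    exact three_mul_sq_sub_one_le_klFun (div_pos (hp y) (hq y))
  calc ∑ y, |p y - q y| ≤ ∑ y, sqrt (c y) * sqrt (k y) := sum_le_sum fun y _ => hpointwise y
    _ ≤ sqrt (∑ y, c y) * sqrt (∑ y, k y) := sum_sqrt_mul_sqrt_le _ hc hk
    _ = sqrt (2 * kl p q) := by
      rw [hcsum, ← sqrt_mul zero_le_two, kl_eq_sum_mul_klFun hq (hp1.trans hq1.symm)]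

end KL

section Risk

variable {Y : Type*} [Fintype Y]

lemma kl_gibbs_nonneg {a b : Y → ℝ} (ha : ∀ y, 0 ≤ a y) (ha1 : ∑ y, a y = 1)
    (hb : ∀ y, 0 < b y) (τ : ℝ) (u : Y → ℝ) : 0 ≤ kl a (gibbs_s10 b τ u) := by
  have : Nonempty Y := univ_nonempty_iff.1 (nonempty_of_sum_ne_zero (ha1 ▸ one_ne_zero))
  exact kl_nonneg ha (gibbs_pos hb τ u) (by rw [ha1, sum_gibbs hb])

lemma auc_div_sub_auc_le_sqrt_kl {τ : ℝ} (hτ : 0 < τ) {a b : Y → ℝ} (ha : ∀ y, 0 < a y)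
    (ha1 : ∑ y, a y = 1) (hb : ∀ y, 0 < b y) (hb1 : ∑ y, b y = 1) (u : Y → ℝ) :
    auc a b (fun y => a y / b y) - auc a b u ≤ sqrt (2 * kl a (gibbs_s10 b τ u)) := by
  have : Nonempty Y := univ_nonempty_iff.1 (nonempty_of_sum_ne_zero (ha1 ▸ one_ne_zero))
  exact (auc_div_sub_auc_le hτ a hb hb1 u).trans
    (sum_abs_sub_le_sqrt_two_mul_kl ha (gibbs_pos hb τ u) ha1 (sum_gibbs hb τ u))

lemma sum_mul_log_sum_exp_eq {a b : Y → ℝ} (ha : ∀ y, 0 < a y) (hb : ∀ y, 0 < b y) (τ : ℝ)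
    (u : Y → ℝ) :
    ∑ y, a y * (τ * log (∑ y', b y' * exp ((u y' - u y) / τ)))
      = τ * (kl a (gibbs_s10 b τ u) - kl a b) := by
  simp only [kl, ← div_gibbs hb, mul_sum, ← sum_sub_distrib]
  refine sum_congr rfl fun y _ => ?_
  have hg := (gibbs_pos hb τ u y).ne'
  rw [log_div (ha y).ne' hg, log_div (ha y).ne' (hb y).ne', log_div (hb y).ne' hg]
  ring

end Risk

section Population

variable {X Y : Type*} [Fintype X] [Fintype Y] {μX : X → ℝ} {pp pm : X → Y → ℝ} {τ : ℝ}

lemma Escore_le_Escore_div (hμ : ∀ x, 0 ≤ μX x) (hpm : ∀ x y, 0 < pm x y) (u : X → Y → ℝ) :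
    Escore μX pp pm u ≤ Escore μX pp pm (fun x y => pp x y / pm x y) :=
  sum_le_sum fun x _ => mul_le_mul_of_nonneg_left (auc_le_auc_div _ (hpm x) _) (hμ x)

lemma Escore_div_sub_Escore_le (hτ : 0 < τ) (hμ : ∀ x, 0 ≤ μX x) (hμ1 : ∑ x, μX x = 1)
    (hpp : ∀ x y, 0 < pp x y) (hpp1 : ∀ x, ∑ y, pp x y = 1)
    (hpm : ∀ x y, 0 < pm x y) (hpm1 : ∀ x, ∑ y, pm x y = 1) (u : X → Y → ℝ) :
    Escore μX pp pm (fun x y => pp x y / pm x y) - Escore μX pp pm u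
      ≤ sqrt (2 * ∑ x, μX x * kl (pp x) (gibbs_s10 (pm x) τ (u x))) := by
  have hkl : ∀ x, 0 ≤ 2 * kl (pp x) (gibbs_s10 (pm x) τ (u x)) := fun x =>
    mul_nonneg zero_le_two (kl_gibbs_nonneg (fun y => (hpp x y).le) (hpp1 x) (hpm x) τ (u x))
  rw [Escore_eq_sum_auc, Escore_eq_sum_auc, ← sum_sub_distrib]
  calc ∑ x, (μX x * auc (pp x) (pm x) (fun y => pp x y / pm x y) - μX x * auc (pp x) (pm x) (u x))
      ≤ ∑ x, μX x * sqrt (2 * kl (pp x) (gibbs_s10 (pm x) τ (u x))) :=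
        sum_le_sum fun x _ => by
          rw [← mul_sub]
          exact mul_le_mul_of_nonneg_left
            (auc_div_sub_auc_le_sqrt_kl hτ (hpp x) (hpp1 x) (hpm x) (hpm1 x) (u x)) (hμ x)
    _ ≤ sqrt (∑ x, μX x * (2 * kl (pp x) (gibbs_s10 (pm x) τ (u x)))) :=
        strictConcaveOn_sqrt.concaveOn.le_map_sum (fun x _ => hμ x) hμ1 fun x _ => hkl x
    _ = sqrt (2 * ∑ x, μX x * kl (pp x) (gibbs_s10 (pm x) τ (u x))) := by
        rw [mul_sum]; congr 1; exact sum_congr rfl fun x _ => by ring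

lemma Lrisk_eq (hpp : ∀ x y, 0 < pp x y) (hpm : ∀ x y, 0 < pm x y) (u : X → Y → ℝ) :
    Lrisk μX pp pm τ u
      = τ * ∑ x, μX x * (kl (pp x) (gibbs_s10 (pm x) τ (u x)) - kl (pp x) (pm x)) := by
  rw [mul_sum]
  refine sum_congr rfl fun x _ => ?_
  rw [sum_mul_log_sum_exp_eq (hpp x) (hpm x)]
  ring

lemma Lrisk_sub_Lrisk_log_div (hτ : τ ≠ 0) (hpp : ∀ x y, 0 < pp x y)
    (hpp1 : ∀ x, ∑ y, pp x y = 1) (hpm : ∀ x y, 0 < pm x y) (u : X → Y → ℝ) :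
    Lrisk μX pp pm τ u - Lrisk μX pp pm τ (fun x y => τ * log (pp x y / pm x y))
      = τ * ∑ x, μX x * kl (pp x) (gibbs_s10 (pm x) τ (u x)) := by
  rw [Lrisk_eq hpp hpm, Lrisk_eq hpp hpm, ← mul_sub, ← sum_sub_distrib]
  congr 1
  refine sum_congr rfl fun x _ => ?_
  rw [gibbs_log_div hτ (hpp x) (hpp1 x) (hpm x), kl_self]
  ring

lemma Lrisk_log_div_le (hτ : 0 < τ) (hμ : ∀ x, 0 ≤ μX x) (hpp : ∀ x y, 0 < pp x y)
    (hpp1 : ∀ x, ∑ y, pp x y = 1) (hpm : ∀ x y, 0 < pm x y) (u : X → Y → ℝ) :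
    Lrisk μX pp pm τ (fun x y => τ * log (pp x y / pm x y)) ≤ Lrisk μX pp pm τ u := by
  have := Lrisk_sub_Lrisk_log_div hτ.ne' hpp hpp1 hpm (μX := μX) u
  have : 0 ≤ τ * ∑ x, μX x * kl (pp x) (gibbs_s10 (pm x) τ (u x)) :=
    mul_nonneg hτ.le (sum_nonneg fun x _ => mul_nonneg (hμ x)
      (kl_gibbs_nonneg (fun y => (hpp x y).le) (hpp1 x) (hpm x) τ (u x)))
  linarith

end Population

theorem stmt10_general {X Y : Type*} [Fintype X] [Fintype Y]
    (μX : X → ℝ) (pp pm : X → Y → ℝ) (τ : ℝ) (hτ : 0 < τ)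
    (hμ : ∀ x, 0 ≤ μX x) (hμ1 : ∑ x, μX x = 1)
    (hpp : ∀ x y, 0 < pp x y) (hpp1 : ∀ x, ∑ y, pp x y = 1)
    (hpm : ∀ x y, 0 < pm x y) (hpm1 : ∀ x, ∑ y, pm x y = 1)
    (s : X → Y → ℝ) :
    sSup (Set.range (Escore μX pp pm)) - Escore μX pp pm s
      ≤ Real.sqrt (2/τ) *
        Real.sqrt (Lrisk μX pp pm τ s - sInf (Set.range (Lrisk μX pp pm τ))) := by
  set K := ∑ x, μX x * kl (pp x) (gibbs_s10 (pm x) τ (s x))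
  have hE : sSup (Set.range (Escore μX pp pm)) ≤ Escore μX pp pm (fun x y => pp x y / pm x y) :=
    csSup_le (Set.range_nonempty _) (Set.forall_mem_range.2 (Escore_le_Escore_div hμ hpm))
  have hL : sInf (Set.range (Lrisk μX pp pm τ))
      ≤ Lrisk μX pp pm τ (fun x y => τ * log (pp x y / pm x y)) :=
    csInf_le ⟨_, Set.forall_mem_range.2 (Lrisk_log_div_le hτ hμ hpp hpp1 hpm)⟩
      (Set.mem_range_self _)
  calc sSup (Set.range (Escore μX pp pm)) - Escore μX pp pm s
      ≤ Escore μX pp pm (fun x y => pp x y / pm x y) - Escore μX pp pm s := by linarith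
    _ ≤ sqrt (2 * K) := Escore_div_sub_Escore_le hτ hμ hμ1 hpp hpp1 hpm hpm1 s
    _ = sqrt (2 / τ) * sqrt (τ * K) := by
        rw [← sqrt_mul (by positivity)]; field_simp
    _ ≤ sqrt (2 / τ) * sqrt (Lrisk μX pp pm τ s - sInf (Set.range (Lrisk μX pp pm τ))) := by
        gcongr
        linarith [Lrisk_sub_Lrisk_log_div hτ.ne' hpp hpp1 hpm (μX := μX) s]

/-- Calibration inequality for contrastive learning:
`𝓔* - 𝓔(s) ≤ √(2/τ) √(𝓛(s) - 𝓛*)`, where `𝓔* = sup_s 𝓔(s)` and `𝓛* = inf_s 𝓛(s)`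
over all scoring functions. -/
theorem stmt10 {X Y : Type*} [Fintype X] [Fintype Y] [Nonempty Y]
    (μX : X → ℝ) (pp pm : X → Y → ℝ) (τ : ℝ) (hτ : 0 < τ)
    (hμ : ∀ x, 0 ≤ μX x) (hμ1 : ∑ x, μX x = 1)
    (hpp : ∀ x y, 0 < pp x y) (hpp1 : ∀ x, ∑ y, pp x y = 1)
    (hpm : ∀ x y, 0 < pm x y) (hpm1 : ∀ x, ∑ y, pm x y = 1)
    (s : X → Y → ℝ) :
    sSup (Set.range (Escore μX pp pm)) - Escore μX pp pm s
      ≤ Real.sqrt (2/τ) *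
        Real.sqrt (Lrisk μX pp pm τ s - sInf (Set.range (Lrisk μX pp pm τ))) :=
  stmt10_general μX pp pm τ hτ hμ hμ1 hpp hpp1 hpm hpm1 s
end

section
/- Let $\varphi:\mathbb{R}\to\mathbb{R}\cup\{+\infty\}$ be a proper closed convex function attaining its minimum value $0$ at $t=1$, and let $\varphi^*(s) = \sup_{t\ge 0}\{ts - \varphi(t)\}$. Then for any real numbers $z_1,\dots,z_m$ and $\tau>0$, the DRO–OCE duality holds: $\max_{\mathbf{p}\in\Delta_m}\left\{\sum_{j=1}^m p_j z_j - \tau\sum_{j=1}^m \frac{1}{m}\varphi(m p_j)\right\} = \min_{\mu\in\mathbb{R}}\left\{\mu + \frac{\tau}{m}\sum_{j=1}^m \varphi^*\left(\frac{z_j-\mu}{\tau}\right)\right\}$, where $\Delta_m = \{\mathbf{p}\in\mathbb{R}^m : p_j\ge 0, \sum_j p_j = 1\}$. -/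
/-!
Lagrangian duality for the single constraint `∑ p = 1`. Weak duality is the Fenchel–Young
inequality `t s - φ t ≤ φ* s` applied to `t = m pⱼ`, termwise. For strong duality one needs a
multiplier `μ` and maximizers `tⱼ` of `t ↦ t sⱼ - φ t` at `sⱼ = (zⱼ - μ)/τ` with `∑ tⱼ = m`;
then `pⱼ = tⱼ / m` attains the bound. The maximizer sets are nonempty intervals depending
monotonically on `s`, with closed graph, so shifting all `sⱼ` by a common
constant `c`, the total maximizer mass jumps across `m` at some threshold `c₀`; the one-sided
limits at `c₀` give two admissible selections whose sums straddle `m`, and a point on the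
segment between them has sum exactly `m`.
-/

open Filter Topology Set Finset

def IsNonnegConjugate (φ φstar : ℝ → ℝ) : Prop :=
  ∀ s, IsLUB {v : ℝ | ∃ t : ℝ, 0 ≤ t ∧ v = t * s - φ t} (φstar s)

def conjArgmax (φ φstar : ℝ → ℝ) (s : ℝ) : Set ℝ :=
  {t | 0 ≤ t ∧ t * s - φ t = φstar s}

theorem csSup_eq_csInf_range_of_forall_le {α ι : Type*} [ConditionallyCompleteLattice α]
    {S : Set α} {f : ι → α} (hle : ∀ v ∈ S, ∀ i, v ≤ f i) {i : ι} (hi : f i ∈ S) :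
    sSup S = sInf (range f) :=
  (IsGreatest.csSup_eq ⟨hi, fun v hv => hle v hv i⟩).trans
    (IsLeast.csInf_eq ⟨mem_range_self i, by rintro _ ⟨k, rfl⟩; exact hle _ hi k⟩).symm

theorem Monotone.exists_threshold {g : ℝ → ℝ} (hg : Monotone g) {n : ℝ}
    (hlt : ∃ c, g c < n) (hle : ∃ c, n ≤ g c) :
    ∃ c₀, (∀ c < c₀, g c < n) ∧ ∀ c, c₀ < c → n ≤ g c := by
  obtain ⟨c₁, hc₁⟩ := hle
  have hbdd : BddAbove {c | g c < n} :=
    ⟨c₁, fun c hc => le_of_not_gt fun h => (hc₁.trans (hg h.le)).not_gt hc⟩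
  refine ⟨sSup {c | g c < n}, fun c hc => ?_, fun c hc => ?_⟩
  · obtain ⟨c', hc', hcc'⟩ := exists_lt_of_lt_csSup hlt hc
    exact (hg hcc'.le).trans_lt hc'
  · exact not_lt.1 fun hcn => (le_csSup hbdd hcn).not_gt hc

theorem exists_sum_eq_of_convex {ι : Type*} [Fintype ι] {K : ι → Set ℝ}
    (hK : ∀ j, Convex ℝ (K j)) {a b : ι → ℝ} (ha : ∀ j, a j ∈ K j) (hb : ∀ j, b j ∈ K j)
    {c : ℝ} (hac : ∑ j, a j ≤ c) (hcb : c ≤ ∑ j, b j) :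
    ∃ t : ι → ℝ, (∀ j, t j ∈ K j) ∧ ∑ j, t j = c := by
  obtain ⟨t, ht, hsum⟩ := (convex_segment a b).isPreconnected.intermediate_value
    (left_mem_segment ℝ a b) (right_mem_segment ℝ a b)
    (f := fun t : ι → ℝ => ∑ j, t j) (by fun_prop) ⟨hac, hcb⟩
  have hpi : Convex ℝ (univ.pi K) := convex_pi fun j _ => hK j
  exact ⟨t, fun j => hpi.segment_subset (fun j _ => ha j) (fun j _ => hb j) ht j (mem_univ j),
    hsum⟩

namespace IsNonnegConjugate

variable {φ φstar : ℝ → ℝ}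

theorem le (h : IsNonnegConjugate φ φstar) {t : ℝ} (ht : 0 ≤ t) (s : ℝ) :
    t * s - φ t ≤ φstar s :=
  (h s).1 ⟨t, ht, rfl⟩

theorem convexOn (h : IsNonnegConjugate φ φstar) : ConvexOn ℝ univ φstar := by
  refine ⟨convex_univ, fun s₁ _ s₂ _ a b ha hb hab => (h _).2 ?_⟩
  rintro _ ⟨t, ht, rfl⟩
  have h₁ := mul_le_mul_of_nonneg_left (h.le ht s₁) ha
  have h₂ := mul_le_mul_of_nonneg_left (h.le ht s₂) hb
  calc t * (a • s₁ + b • s₂) - φ t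
      = a * (t * s₁ - φ t) + b * (t * s₂ - φ t) := by
        simp only [smul_eq_mul]; linear_combination φ t * hab
    _ ≤ a • φstar s₁ + b • φstar s₂ := by simp only [smul_eq_mul]; linarith

theorem continuous (h : IsNonnegConjugate φ φstar) : Continuous φstar :=
  continuousOn_univ.1 (h.convexOn.continuousOn isOpen_univ)

theorem conjArgmax_nonempty (h : IsNonnegConjugate φ φstar) (hφ : Continuous φ) (s : ℝ) :
    (conjArgmax φ φstar s).Nonempty := by
  set T := max 0 (φstar (s + 1) + φ 0)
  obtain ⟨t₀, ht₀, hmax⟩ := isCompact_Icc.exists_isMaxOn (nonempty_Icc.2 (le_max_left 0 _))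
    (f := fun t => t * s - φ t) (by fun_prop)
  have hgreatest : IsGreatest {v : ℝ | ∃ t : ℝ, 0 ≤ t ∧ v = t * s - φ t} (t₀ * s - φ t₀) := by
    refine ⟨⟨t₀, ht₀.1, rfl⟩, ?_⟩
    rintro _ ⟨t, ht, rfl⟩
    by_cases htT : t ≤ T
    · exact hmax ⟨ht, htT⟩
    -- beyond `T`, the bound `φstar (s + 1)` makes `t s - φ t` smaller than its value at `0`
    · have h₁ := h.le ht (s + 1)
      have h₀ : 0 * s - φ 0 ≤ t₀ * s - φ t₀ := hmax ⟨le_rfl, le_max_left _ _⟩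
      have : φstar (s + 1) + φ 0 ≤ T := le_max_right _ _
      linarith
  exact ⟨t₀, ht₀.1, hgreatest.isLUB.unique (h s)⟩

theorem le_of_mem_conjArgmax (h : IsNonnegConjugate φ φstar) {s s' t t' : ℝ} (hs : s < s')
    (ht : t ∈ conjArgmax φ φstar s) (ht' : t' ∈ conjArgmax φ φstar s') : t ≤ t' := by
  have h₁ := h.le ht'.1 s
  have h₂ := h.le ht.1 s'
  rw [← ht.2] at h₁
  rw [← ht'.2] at h₂
  nlinarith

theorem convex_conjArgmax (h : IsNonnegConjugate φ φstar) (hφ : ConvexOn ℝ univ φ) (s : ℝ) :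
    Convex ℝ (conjArgmax φ φstar s) := by
  rintro t₁ ⟨ht₁, h₁⟩ t₂ ⟨ht₂, h₂⟩ a b ha hb hab
  have hφab := hφ.2 (mem_univ t₁) (mem_univ t₂) ha hb hab
  simp only [smul_eq_mul] at hφab ⊢
  have h0 : 0 ≤ a * t₁ + b * t₂ := by positivity
  refine ⟨h0, le_antisymm (h.le h0 s) ?_⟩
  calc φstar s = a * (t₁ * s - φ t₁) + b * (t₂ * s - φ t₂) := by
        rw [h₁, h₂, ← add_mul, hab, one_mul]
    _ ≤ (a * t₁ + b * t₂) * s - φ (a * t₁ + b * t₂) := by linarith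

theorem isClosed_conjArgmax_graph (h : IsNonnegConjugate φ φstar) (hφ : Continuous φ) :
    IsClosed {x : ℝ × ℝ | x.2 ∈ conjArgmax φ φstar x.1} :=
  (isClosed_le continuous_const continuous_snd).inter
    (isClosed_eq (by fun_prop) (h.continuous.comp continuous_fst))

theorem mem_conjArgmax_of_tendsto (h : IsNonnegConjugate φ φstar) (hφ : Continuous φ)
    {α : Type*} {l : Filter α} [l.NeBot] {u t : α → ℝ} {s L : ℝ} (hu : Tendsto u l (𝓝 s))
    (ht : Tendsto t l (𝓝 L)) (hmem : ∀ᶠ x in l, t x ∈ conjArgmax φ φstar (u x)) :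
    L ∈ conjArgmax φ φstar s :=
  (h.isClosed_conjArgmax_graph hφ).mem_of_tendsto (hu.prodMk_nhds ht) hmem

theorem exists_monotone_conjArgmax_selection (h : IsNonnegConjugate φ φstar)
    (hφ : Continuous φ) : ∃ sel : ℝ → ℝ, Monotone sel ∧ ∀ s, sel s ∈ conjArgmax φ φstar s := by
  choose sel hsel using h.conjArgmax_nonempty hφ
  exact ⟨sel, monotone_iff_forall_lt.2 fun s s' hs =>
    h.le_of_mem_conjArgmax hs (hsel s) (hsel s'), hsel⟩

theorem eventually_atBot_conjArgmax_lt_one (h : IsNonnegConjugate φ φstar) :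
    ∀ᶠ s in atBot, ∀ t ∈ conjArgmax φ φstar s, t < 1 := by
  filter_upwards [eventually_lt_atBot 0, eventually_lt_atBot (-(φstar 0 + φ 0))]
    with s hs₀ hs t ⟨ht, hts⟩
  have h₀ := h.le le_rfl s
  have h₁ := h.le ht 0
  by_contra! h₂
  nlinarith

theorem eventually_atTop_one_le_conjArgmax (h : IsNonnegConjugate φ φstar) :
    ∀ᶠ s in atTop, ∀ t ∈ conjArgmax φ φstar s, 1 ≤ t := by
  filter_upwards [eventually_gt_atTop 0, eventually_gt_atTop (φ 2 + φstar 0)]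
    with s hs₀ hs t ⟨ht, hts⟩
  have h₂ := h.le zero_le_two s
  have h₁ := h.le ht 0
  by_contra! h₃
  nlinarith

theorem exists_sum_conjArgmax_eq_card (h : IsNonnegConjugate φ φstar) (hφ : ConvexOn ℝ univ φ)
    {ι : Type*} [Fintype ι] [Nonempty ι] (w : ι → ℝ) :
    ∃ c : ℝ, ∃ t : ι → ℝ, (∀ j, t j ∈ conjArgmax φ φstar (w j + c)) ∧
      ∑ j, t j = Fintype.card ι := by
  have hcont : Continuous φ := continuousOn_univ.1 (hφ.continuousOn isOpen_univ)
  obtain ⟨sel, hsel_mono, hsel⟩ := h.exists_monotone_conjArgmax_selection hcont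
  set f : ι → ℝ → ℝ := fun j c => sel (w j + c)
  have hf_mono : ∀ j, Monotone (f j) := fun j c c' hc => hsel_mono (by linarith)
  have hlow : ∃ c, ∑ j, f j c < Fintype.card ι := by
    obtain ⟨c, hc⟩ := (eventually_all.2 fun j => (tendsto_atBot_add_const_left _ (w j)
      tendsto_id).eventually h.eventually_atBot_conjArgmax_lt_one).exists
    exact ⟨c, by simpa using sum_lt_sum_of_nonempty univ_nonempty fun j _ => hc j _ (hsel _)⟩
  have hhigh : ∃ c, (Fintype.card ι : ℝ) ≤ ∑ j, f j c := by
    obtain ⟨c, hc⟩ := (eventually_all.2 fun j => (tendsto_atTop_add_const_left _ (w j)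
      tendsto_id).eventually h.eventually_atTop_one_le_conjArgmax).exists
    exact ⟨c, (by simp : (Fintype.card ι : ℝ) = ∑ _j : ι, 1).trans_le
      (sum_le_sum fun j _ => hc j _ (hsel _))⟩
  obtain ⟨c₀, hbelow, habove⟩ := Monotone.exists_threshold
    (fun c c' hc => sum_le_sum fun j _ => hf_mono j hc) hlow hhigh
  have hlim_mem : ∀ j {l : Filter ℝ} [l.NeBot] {L : ℝ}, l ≤ 𝓝 c₀ → Tendsto (f j) l (𝓝 L) →
      L ∈ conjArgmax φ φstar (w j + c₀) := fun j l _ L hl hL =>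
    h.mem_conjArgmax_of_tendsto hcont ((tendsto_const_nhds.add tendsto_id).mono_left hl) hL
      (Eventually.of_forall fun c => hsel _)
  have hleft := fun j => (hf_mono j).tendsto_nhdsLT c₀
  have hright := fun j => (hf_mono j).tendsto_nhdsGT c₀
  exact ⟨c₀, exists_sum_eq_of_convex (fun j => h.convex_conjArgmax hφ _)
    (fun j => hlim_mem j nhdsWithin_le_nhds (hleft j))
    (fun j => hlim_mem j nhdsWithin_le_nhds (hright j))
    (le_of_tendsto (tendsto_finsetSum _ fun j _ => hleft j)
      (eventually_nhdsWithin_of_forall fun c hc => (hbelow c hc).le))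
    (ge_of_tendsto (tendsto_finsetSum _ fun j _ => hright j)
      (eventually_nhdsWithin_of_forall fun c hc => habove c hc))⟩

end IsNonnegConjugate

section Objective

variable {ι : Type*} [Fintype ι]

theorem objective_eq_lagrangian {n τ : ℝ} (hn : n ≠ 0) (hτ : τ ≠ 0) (φ : ℝ → ℝ)
    (z p : ι → ℝ) (hp : ∑ j, p j = 1) (μ : ℝ) :
    ∑ j, p j * z j - τ * ∑ j, (1 / n) * φ (n * p j)
      = μ + (τ / n) * ∑ j, (n * p j * ((z j - μ) / τ) - φ (n * p j)) := by
  have hterm : ∀ j, τ / n * (n * p j * ((z j - μ) / τ) - φ (n * p j))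
      = p j * z j - μ * p j - τ * ((1 / n) * φ (n * p j)) := fun j => by
    field_simp
  rw [mul_sum, mul_sum, sum_congr rfl fun j _ => hterm j, sum_sub_distrib, sum_sub_distrib,
    ← mul_sum univ p μ, hp]
  ring

theorem objective_le {n τ : ℝ} (hn : 0 < n) (hτ : 0 < τ) {φ φstar : ℝ → ℝ}
    (h : IsNonnegConjugate φ φstar) (z p : ι → ℝ) (hp₀ : ∀ j, 0 ≤ p j) (hp : ∑ j, p j = 1)
    (μ : ℝ) :
    ∑ j, p j * z j - τ * ∑ j, (1 / n) * φ (n * p j)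
      ≤ μ + (τ / n) * ∑ j, φstar ((z j - μ) / τ) := by
  rw [objective_eq_lagrangian hn.ne' hτ.ne' φ z p hp μ]
  gcongr with j
  exact h.le (mul_nonneg hn.le (hp₀ j)) _

theorem objective_eq_of_mem_conjArgmax {n τ : ℝ} (hn : n ≠ 0) (hτ : τ ≠ 0)
    {φ φstar : ℝ → ℝ} (z p : ι → ℝ) (hp : ∑ j, p j = 1) (μ : ℝ)
    (hmem : ∀ j, n * p j ∈ conjArgmax φ φstar ((z j - μ) / τ)) :
    ∑ j, p j * z j - τ * ∑ j, (1 / n) * φ (n * p j)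
      = μ + (τ / n) * ∑ j, φstar ((z j - μ) / τ) := by
  rw [objective_eq_lagrangian hn hτ φ z p hp μ]
  exact congrArg _ (congrArg _ (sum_congr rfl fun j _ => (hmem j).2))

end Objective

theorem stmt13_general (m : ℕ) (hm : 0 < m) (τ : ℝ) (hτ : 0 < τ)
    (φ : ℝ → ℝ) (hconv : ConvexOn ℝ Set.univ φ)
    (φstar : ℝ → ℝ)
    (hφstar : ∀ s : ℝ, IsLUB {v : ℝ | ∃ t : ℝ, 0 ≤ t ∧ v = t * s - φ t} (φstar s))
    (z : Fin m → ℝ) :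
    sSup {v : ℝ | ∃ p : Fin m → ℝ, (∀ j, 0 ≤ p j) ∧ (∑ j, p j = 1) ∧
        v = ∑ j, p j * z j - τ * ∑ j, (1/(m:ℝ)) * φ ((m:ℝ) * p j)}
      = sInf (Set.range fun μ : ℝ => μ + (τ/(m:ℝ)) * ∑ j, φstar ((z j - μ)/τ)) := by
  have h : IsNonnegConjugate φ φstar := hφstar
  have hn : (0 : ℝ) < m := Nat.cast_pos.2 hm
  have : Nonempty (Fin m) := ⟨⟨0, hm⟩⟩
  obtain ⟨c, t, ht, hsum⟩ := h.exists_sum_conjArgmax_eq_card hconv fun j => z j / τ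
  rw [Fintype.card_fin] at hsum
  have hμ : ∀ j, (z j - -(τ * c)) / τ = z j / τ + c := fun j => by field_simp; ring
  have hp₀ : ∀ j, 0 ≤ t j / m := fun j => div_nonneg (ht j).1 hn.le
  have hp : ∑ j, t j / (m : ℝ) = 1 := by rw [← sum_div, hsum, div_self hn.ne']
  refine csSup_eq_csInf_range_of_forall_le ?_ (i := -(τ * c))
    ⟨fun j => t j / m, hp₀, hp, (objective_eq_of_mem_conjArgmax hn.ne' hτ.ne' z _ hp _
      fun j => by rw [mul_div_cancel₀ _ hn.ne', hμ]; exact ht j).symm⟩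
  rintro _ ⟨p, hp₀, hp, rfl⟩ μ
  exact objective_le hn hτ h z p hp₀ hp μ

/-- DRO–OCE duality: for a convex `φ : ℝ → ℝ` with minimum value `0` attained at `1`,
and its conjugate `φ*(s) = sup_{t ≥ 0} {ts - φ(t)}`,
`max_{p ∈ Δ_m} { ∑ p_j z_j - τ D_φ(p, 1/m) } = min_μ { μ + (τ/m) ∑ φ*((z_j-μ)/τ) }`,
where `D_φ(p, 1/m) = ∑_j (1/m) φ(m p_j)`. -/
theorem stmt13 (m : ℕ) (hm : 0 < m) (τ : ℝ) (hτ : 0 < τ)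
    (φ : ℝ → ℝ) (hconv : ConvexOn ℝ Set.univ φ)
    (hφ1 : φ 1 = 0) (hφnn : ∀ t : ℝ, 0 ≤ φ t)
    (φstar : ℝ → ℝ)
    (hφstar : ∀ s : ℝ, IsLUB {v : ℝ | ∃ t : ℝ, 0 ≤ t ∧ v = t * s - φ t} (φstar s))
    (z : Fin m → ℝ) :
    sSup {v : ℝ | ∃ p : Fin m → ℝ, (∀ j, 0 ≤ p j) ∧ (∑ j, p j = 1) ∧
        v = ∑ j, p j * z j - τ * ∑ j, (1/(m:ℝ)) * φ ((m:ℝ) * p j)}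
      = sInf (Set.range fun μ : ℝ => μ + (τ/(m:ℝ)) * ∑ j, φstar ((z j - μ)/τ)) :=
  stmt13_general m hm τ hτ φ hconv φstar hφstar z
end
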